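/- arXiv:2405.16541 — 2 statements merged into one kernel-verified Lean document; each statement's English description precedes it below -/
import Mathlib

section
/- Let d ≥ 1 be an integer and v > 0 a real number. Suppose Γ ⊆ [0,∞) × [0,∞) is a c_RLF-monotone set, i.e., for all (x₁,y₁), (x₂,y₂) ∈ Γ one has c_RLF(x₁,y₁) + c_RLF(x₂,y₂) ≤ c_RLF(x₁,y₂) + c_RLF(x₂,y₁). Then Γ is antitone: for all (x₁,y₁), (x₂,y₂) ∈ Γ, x₁ < x₂ implies y₁ ≥ y₂. -/
noncomputable section

/-- The random Laplace feature cost function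
`c_RLF(x,y) = Σ_k v^(2k) (x² + y²)^k / (4^k k! Γ(k + d/2))`. -/
def cRLF (d : ℕ) (v : ℝ) (x y : ℝ) : ℝ :=
  ∑' k : ℕ,
    v ^ (2 * k) * (x ^ 2 + y ^ 2) ^ k /
      (4 ^ k * (Nat.factorial k) * Real.Gamma ((k : ℝ) + d / 2))

/-! `cRLF d v x y = F (x ^ 2 + y ^ 2)` for a power series `F` with nonnegative coefficients and
positive quadratic coefficient (when `v ≠ 0`), so `F` is strictly convex on `[0, ∞)`. Strict
convexity makes `(s, t) ↦ F (s + t)` strictly supermodular there: for `a < b` and `c < e`,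
`F (a + e) + F (b + c) < F (a + c) + F (b + e)`. Two points of a monotone set with `x₁ < x₂` and
`y₁ < y₂` would violate exactly this with `a, b, c, e = x₁², x₂², y₁², y₂²`. -/

open Real Filter

lemma add_pow_add_add_pow_le {x₁ x₂ y₁ y₂ : ℝ} (hpos : 0 ≤ x₁ + y₁) (hx : x₁ ≤ x₂)
    (hy : y₁ ≤ y₂) (k : ℕ) :
    (x₁ + y₂) ^ k + (x₂ + y₁) ^ k ≤ (x₁ + y₁) ^ k + (x₂ + y₂) ^ k := by
  -- `(x₂ + y) ^ k - (x₁ + y) ^ k = (x₂ - x₁) * ∑ …` with a sum that is monotone in `y`.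
  have hsum : ∑ i ∈ Finset.range k, (x₂ + y₁) ^ i * (x₁ + y₁) ^ (k - 1 - i) ≤
      ∑ i ∈ Finset.range k, (x₂ + y₂) ^ i * (x₁ + y₂) ^ (k - 1 - i) := by
    refine Finset.sum_le_sum fun i _ ↦ mul_le_mul ?_ ?_ ?_ ?_
    · exact pow_le_pow_left₀ (by linarith) (by linarith) i
    · exact pow_le_pow_left₀ (by linarith) (by linarith) _
    · exact pow_nonneg (by linarith) _
    · exact pow_nonneg (by linarith) _
  have hlow := geom_sum₂_mul (x₂ + y₁) (x₁ + y₁) k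
  have hhigh := geom_sum₂_mul (x₂ + y₂) (x₁ + y₂) k
  have := mul_le_mul_of_nonneg_right hsum (sub_nonneg.mpr hx)
  rw [show x₂ + y₁ - (x₁ + y₁) = x₂ - x₁ by ring] at hlow
  rw [show x₂ + y₂ - (x₁ + y₂) = x₂ - x₁ by ring] at hhigh
  linarith

lemma tsum_mul_pow_add_add_lt {a : ℕ → ℝ} (ha : ∀ k, 0 ≤ a k) (ha₂ : 0 < a 2)
    {x₁ x₂ y₁ y₂ : ℝ} (hpos : 0 ≤ x₁ + y₁) (hx : x₁ < x₂) (hy : y₁ < y₂)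
    (hsum : Summable fun k ↦ a k * (x₂ + y₂) ^ k) :
    ∑' k, a k * (x₁ + y₂) ^ k + ∑' k, a k * (x₂ + y₁) ^ k <
      ∑' k, a k * (x₁ + y₁) ^ k + ∑' k, a k * (x₂ + y₂) ^ k := by
  have summable_of_le {s : ℝ} (hs : 0 ≤ s) (hs' : s ≤ x₂ + y₂) :
      Summable fun k ↦ a k * s ^ k :=
    hsum.of_nonneg_of_le (fun k ↦ mul_nonneg (ha k) (pow_nonneg hs k))
      (fun k ↦ mul_le_mul_of_nonneg_left (pow_le_pow_left₀ hs hs' k) (ha k))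
  have hle (k : ℕ) :
      a k * (x₁ + y₂) ^ k + a k * (x₂ + y₁) ^ k ≤ a k * (x₁ + y₁) ^ k + a k * (x₂ + y₂) ^ k := by
    simp only [← mul_add]
    exact mul_le_mul_of_nonneg_left (add_pow_add_add_pow_le hpos hx.le hy.le k) (ha k)
  have hlt : a 2 * (x₁ + y₂) ^ 2 + a 2 * (x₂ + y₁) ^ 2 <
      a 2 * (x₁ + y₁) ^ 2 + a 2 * (x₂ + y₂) ^ 2 := by
    simp only [← mul_add]
    exact mul_lt_mul_of_pos_left (by nlinarith [mul_pos (sub_pos.mpr hx) (sub_pos.mpr hy)]) ha₂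
  have hs₁₁ := summable_of_le (s := x₁ + y₁) hpos (by linarith)
  have hs₁₂ := summable_of_le (s := x₁ + y₂) (by linarith) (by linarith)
  have hs₂₁ := summable_of_le (s := x₂ + y₁) (by linarith) (by linarith)
  rw [← hs₁₂.tsum_add hs₂₁, ← hs₁₁.tsum_add hsum]
  exact Summable.tsum_lt_tsum hle hlt (hs₁₂.add hs₂₁) (hs₁₁.add hsum)

lemma Real.one_le_Gamma_of_two_le {x : ℝ} (hx : 2 ≤ x) : 1 ≤ Gamma x :=
  Gamma_two ▸ Gamma_strictMonoOn_Ici.monotoneOn Set.self_mem_Ici hx hx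

def cRLFCoeff (d : ℕ) (v : ℝ) (k : ℕ) : ℝ :=
  v ^ (2 * k) / (4 ^ k * k.factorial * Gamma (k + d / 2))

lemma cRLF_eq_tsum (d : ℕ) (v x y : ℝ) :
    cRLF d v x y = ∑' k, cRLFCoeff d v k * (x ^ 2 + y ^ 2) ^ k := by
  simp only [cRLF, cRLFCoeff, div_mul_eq_mul_div]

lemma cRLFCoeff_nonneg (d : ℕ) (v : ℝ) (k : ℕ) : 0 ≤ cRLFCoeff d v k := by
  have : 0 ≤ Gamma (k + d / 2) := Gamma_nonneg_of_nonneg (by positivity)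
  unfold cRLFCoeff
  rw [pow_mul]
  positivity

lemma cRLFCoeff_two_pos (d : ℕ) {v : ℝ} (hv : v ≠ 0) : 0 < cRLFCoeff d v 2 := by
  have : 0 < Gamma (2 + d / 2) := Gamma_pos_of_pos (by positivity)
  unfold cRLFCoeff
  push_cast
  positivity

lemma summable_cRLFCoeff_mul_pow (d : ℕ) (v s : ℝ) :
    Summable fun k ↦ cRLFCoeff d v k * s ^ k := by
  refine (Real.summable_pow_div_factorial (v ^ 2 * |s| / 4)).of_norm_bounded_eventually_nat ?_
  filter_upwards [eventually_ge_atTop 2] with k hk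
  have hΓ : 1 ≤ Gamma (k + d / 2) := by
    have : (2 : ℝ) ≤ k := by exact_mod_cast hk
    exact one_le_Gamma_of_two_le (by linarith [show (0 : ℝ) ≤ d / 2 by positivity])
  calc ‖cRLFCoeff d v k * s ^ k‖
      = v ^ (2 * k) * |s| ^ k / (4 ^ k * k.factorial * Gamma (k + d / 2)) := by
        rw [norm_mul, norm_pow, Real.norm_of_nonneg (cRLFCoeff_nonneg d v k), Real.norm_eq_abs,
          cRLFCoeff, div_mul_eq_mul_div]
    _ ≤ v ^ (2 * k) * |s| ^ k / (4 ^ k * k.factorial) :=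
        div_le_div_of_nonneg_left (by rw [pow_mul]; positivity) (by positivity)
          (le_mul_of_one_le_right (by positivity) hΓ)
    _ = (v ^ 2 * |s| / 4) ^ k / k.factorial := by rw [div_pow, mul_pow, ← pow_mul, div_div]

theorem cRLF_monotone_set_antitone_general (d : ℕ) (v : ℝ) (hv : 0 < v)
    (Γ : Set (ℝ × ℝ)) (hΓ : Γ ⊆ Set.Ici (0 : ℝ) ×ˢ Set.Ici (0 : ℝ))
    (hmono : ∀ p ∈ Γ, ∀ q ∈ Γ,
      cRLF d v p.1 p.2 + cRLF d v q.1 q.2 ≤ cRLF d v p.1 q.2 + cRLF d v q.1 p.2) :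
    ∀ p ∈ Γ, ∀ q ∈ Γ, p.1 < q.1 → q.2 ≤ p.2 := by
  intro p hp q hq hx
  by_contra! hy
  obtain ⟨hp₁, hp₂⟩ := hΓ hp
  have key := tsum_mul_pow_add_add_lt (cRLFCoeff_nonneg d v) (cRLFCoeff_two_pos d hv.ne')
    (by positivity) (pow_lt_pow_left₀ hx hp₁ two_ne_zero)
    (pow_lt_pow_left₀ hy hp₂ two_ne_zero) (summable_cRLFCoeff_mul_pow d v _)
  simp only [← cRLF_eq_tsum] at key
  linarith [hmono p hp q hq]

/-- Any `c_RLF`-monotone subset of `[0,∞) × [0,∞)` is antitone: if `x₁ < x₂` then `y₁ ≥ y₂`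
for points `(x₁,y₁), (x₂,y₂)` of the set. -/
theorem cRLF_monotone_set_antitone (d : ℕ) (hd : 1 ≤ d) (v : ℝ) (hv : 0 < v)
    (Γ : Set (ℝ × ℝ)) (hΓ : Γ ⊆ Set.Ici (0 : ℝ) ×ˢ Set.Ici (0 : ℝ))
    (hmono : ∀ p ∈ Γ, ∀ q ∈ Γ,
      cRLF d v p.1 p.2 + cRLF d v q.1 q.2 ≤ cRLF d v p.1 q.2 + cRLF d v q.1 p.2) :
    ∀ p ∈ Γ, ∀ q ∈ Γ, p.1 < q.1 → q.2 ≤ p.2 :=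
  cRLF_monotone_set_antitone_general d v hv Γ hΓ hmono

end
end

section
/- Let d ≥ 1 be an integer and v ≥ 0 a real number. For every coupling μ of χ_d with itself, the positive monotone coupling μ_PM satisfies ∫ c_RLF dμ ≤ ∫ c_RLF dμ_PM. That is, among all probability measures on ℝ × ℝ with both marginals equal to χ_d, the positive monotone coupling maximizes the expected cost c_RLF. -/
/-!
Every term of `c_RLF` is a nonnegative multiple of `(x² + y²)ᵏ`, and convexity of `t ↦ tᵏ`
gives `2 (x² + y²)ᵏ ≤ (2x²)ᵏ + (2y²)ᵏ`. Integrating this against a coupling whose marginals are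
both `χ_d` bounds `∫ c_RLF dμ` by `∫ c_RLF(x, x) dχ_d(x)`. That bound is attained by `μ_PM`,
which is the law of `(X, X)` with `X ∼ χ_d` because the quantile transform pushes the uniform law
on `[0, 1]` to `χ_d`.
-/

open MeasureTheory ProbabilityTheory

noncomputable section

/-- The standard Gaussian measure on `ℝ^d` (the `d`-fold product of `N(0,1)`),
realized on `EuclideanSpace ℝ (Fin d)` so that the norm is the Euclidean norm. -/
def stdGaussian (d : ℕ) : Measure (EuclideanSpace ℝ (Fin d)) :=
  (Measure.pi fun _ : Fin d => gaussianReal 0 1).map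
    (EuclideanSpace.equiv (Fin d) ℝ).symm

/-- The chi distribution with `d` degrees of freedom: the law of the Euclidean norm of a
standard Gaussian vector in `ℝ^d`. -/
def chi (d : ℕ) : Measure ℝ := (stdGaussian d).map fun x => ‖x‖

/-- The cumulative distribution function of `χ_d`. -/
def chiCDF (d : ℕ) (x : ℝ) : ℝ := (chi d (Set.Iic x)).toReal

/-- The quantile function `F⁻¹(u) = inf {x : F x ≥ u}` of `χ_d`. -/
def chiQuantile (d : ℕ) (u : ℝ) : ℝ := sInf {x : ℝ | u ≤ chiCDF d x}

/-- The negative monotone coupling of `χ_d` with itself: the pushforward of the uniform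
probability measure on `[0,1]` under `u ↦ (F⁻¹(u), F⁻¹(1 - u))`. -/
def muNM (d : ℕ) : Measure (ℝ × ℝ) :=
  ((volume : Measure ℝ).restrict (Set.Icc 0 1)).map
    fun u => (chiQuantile d u, chiQuantile d (1 - u))
/-- The positive monotone coupling of `χ_d` with itself: the pushforward of the uniform
probability measure on `[0,1]` under `u ↦ (F⁻¹(u), F⁻¹(u))`. -/
def muPM (d : ℕ) : Measure (ℝ × ℝ) :=
  ((volume : Measure ℝ).restrict (Set.Icc 0 1)).map
    fun u => (chiQuantile d u, chiQuantile d u)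

open Set Filter
open scoped Topology ENNReal NNReal Nat

lemma Real.Gamma_le_two_pow_mul_Gamma_add_nat {s : ℝ} (hs : 1 / 2 ≤ s) (k : ℕ) :
    Real.Gamma s ≤ 2 ^ k * Real.Gamma (s + k) := by
  induction k with
  | zero => simp
  | succ k ih =>
    have hpos : 0 < s + k := by positivity
    have hGamma : Real.Gamma (s + (k + 1 : ℕ)) = (s + k) * Real.Gamma (s + k) := by
      rw [Nat.cast_succ, ← add_assoc, Real.Gamma_add_one hpos.ne']
    have hGamma_pos := Real.Gamma_pos_of_pos hpos
    rw [hGamma, pow_succ]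
    nlinarith [mul_le_mul_of_nonneg_left (show (1 : ℝ) ≤ 2 * (s + k) by linarith)
      (mul_nonneg (pow_nonneg zero_le_two k) hGamma_pos.le)]

lemma summable_pow_div_factorial_mul_Gamma_add {s : ℝ} (hs : 1 / 2 ≤ s) (t : ℝ) :
    Summable fun k : ℕ => t ^ k / (k ! * Real.Gamma (k + s)) := by
  have hGamma_s := Real.Gamma_pos_of_pos (by linarith : 0 < s)
  refine Summable.of_norm_bounded
    ((Real.summable_pow_div_factorial (2 * |t|)).div_const (Real.Gamma s)) fun k => ?_
  have hGamma_k := Real.Gamma_pos_of_pos (by positivity : 0 < (k : ℝ) + s)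
  have hfact : (0 : ℝ) < k ! := by exact_mod_cast k.factorial_pos
  rw [Real.norm_eq_abs, abs_div, abs_pow, abs_of_pos (by positivity : (0 : ℝ) < k ! * _),
    div_div, div_le_div_iff₀ (by positivity) (by positivity), mul_pow]
  calc |t| ^ k * (k ! * Real.Gamma s)
      ≤ |t| ^ k * (k ! * (2 ^ k * Real.Gamma (s + k))) := by
        gcongr; exact Real.Gamma_le_two_pow_mul_Gamma_add_nat hs k
    _ = 2 ^ k * |t| ^ k * (k ! * Real.Gamma (k + s)) := by rw [add_comm]; ring

-- Only meaningful for `u ∈ (0, 1)`: otherwise the set is empty or unbounded below, and `sInf`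
-- returns the junk value `0`.
def quantile (ν : Measure ℝ) (u : ℝ) : ℝ := sInf {x | u ≤ cdf ν x}

section Quantile

variable (ν : Measure ℝ) {u x : ℝ}

lemma bddBelow_setOf_le_cdf (hu : 0 < u) : BddBelow {x | u ≤ cdf ν x} := by
  obtain ⟨x₀, hx₀⟩ := eventually_atBot.mp ((tendsto_cdf_atBot ν).eventually (gt_mem_nhds hu))
  exact ⟨x₀, fun x hx => le_of_not_ge fun hxx₀ => (hx₀ x hxx₀).not_ge hx⟩

lemma nonempty_setOf_le_cdf (hu : u < 1) : {x | u ≤ cdf ν x}.Nonempty :=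
  ((tendsto_cdf_atTop ν).eventually (eventually_ge_nhds hu)).exists

lemma quantile_le_iff (hu : u ∈ Ioo 0 1) : quantile ν u ≤ x ↔ u ≤ cdf ν x := by
  refine ⟨fun h => le_trans ?_ (monotone_cdf ν h),
    fun h => csInf_le (bddBelow_setOf_le_cdf ν hu.1) h⟩
  -- Right continuity of the cdf puts `quantile ν u` itself into `{x | u ≤ cdf ν x}`.
  have hright : Tendsto (cdf ν) (𝓝[>] quantile ν u) (𝓝 (cdf ν (quantile ν u))) :=
    ((cdf ν).right_continuous _).mono Ioi_subset_Ici_self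
  refine ge_of_tendsto hright (eventually_nhdsWithin_of_forall fun y hy => ?_)
  obtain ⟨z, hz, hzy⟩ := exists_lt_of_csInf_lt (nonempty_setOf_le_cdf ν hu.2) hy
  exact hz.trans (monotone_cdf ν hzy.le)

lemma monotoneOn_quantile : MonotoneOn (quantile ν) (Ioo 0 1) := fun _ hu _ hu' huu' =>
  (quantile_le_iff ν hu).mpr (huu'.trans ((quantile_le_iff ν hu').mp le_rfl))

lemma volume_Ioo_inter_Iic {c : ℝ} (hc : c ≤ 1) : volume (Ioo 0 1 ∩ Iic c) = ENNReal.ofReal c := by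
  refine le_antisymm ?_ ?_
  · calc volume (Ioo 0 1 ∩ Iic c) ≤ volume (Icc 0 c) :=
          measure_mono fun y hy => ⟨hy.1.1.le, hy.2⟩
      _ = ENNReal.ofReal c := by rw [Real.volume_Icc, sub_zero]
  · calc ENNReal.ofReal c = volume (Ioo 0 c) := by rw [Real.volume_Ioo, sub_zero]
      _ ≤ volume (Ioo 0 1 ∩ Iic c) :=
          measure_mono fun y hy => ⟨⟨hy.1, hy.2.trans_le hc⟩, hy.2.le⟩

lemma aemeasurable_quantile : AEMeasurable (quantile ν) (volume.restrict (Icc 0 1)) := by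
  rw [← Measure.restrict_congr_set Ioo_ae_eq_Icc]
  exact aemeasurable_restrict_of_monotoneOn measurableSet_Ioo (monotoneOn_quantile ν)

lemma map_quantile_volume_Icc [IsProbabilityMeasure ν] :
    (volume.restrict (Icc (0 : ℝ) 1)).map (quantile ν) = ν := by
  have hQ := aemeasurable_quantile ν
  rw [← Measure.restrict_congr_set Ioo_ae_eq_Icc] at hQ ⊢
  have : IsFiniteMeasure (volume.restrict (Ioo (0 : ℝ) 1)) := by
    constructor; simp [Real.volume_Ioo]
  refine Measure.ext_of_Iic _ _ fun x => ?_
  have hpre : quantile ν ⁻¹' Iic x ∩ Ioo 0 1 = Ioo 0 1 ∩ Iic (cdf ν x) := by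
    ext u
    simp only [mem_inter_iff, mem_preimage, mem_Iic]
    exact ⟨fun h => ⟨h.2, (quantile_le_iff ν h.2).mp h.1⟩,
      fun h => ⟨(quantile_le_iff ν h.1).mpr h.2, h.1⟩⟩
  rw [Measure.map_apply_of_aemeasurable hQ measurableSet_Iic,
    Measure.restrict_apply' measurableSet_Ioo, hpre, volume_Ioo_inter_Iic (cdf_le_one ν x),
    ofReal_cdf]

end Quantile

lemma lintegral_comp_add_le_of_map_fst_of_map_snd {α : Type*} [MeasurableSpace α]
    {ν : Measure α} {μ : Measure (α × α)} (h1 : μ.map Prod.fst = ν) (h2 : μ.map Prod.snd = ν)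
    {g : α → ℝ≥0∞} (hg : Measurable g) {f : ℝ≥0∞ → ℝ≥0∞} (hf : Measurable f)
    (hmid : ∀ s t, 2 * f (s + t) ≤ f (2 * s) + f (2 * t)) :
    ∫⁻ p, f (g p.1 + g p.2) ∂μ ≤ ∫⁻ x, f (2 * g x) ∂ν := by
  have hfg : Measurable fun x => f (2 * g x) := hf.comp (hg.const_mul 2)
  refine (ENNReal.mul_le_mul_iff_right two_ne_zero ENNReal.ofNat_ne_top).mp ?_
  calc 2 * ∫⁻ p, f (g p.1 + g p.2) ∂μ
      = ∫⁻ p, 2 * f (g p.1 + g p.2) ∂μ := (lintegral_const_mul' _ _ ENNReal.ofNat_ne_top).symm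
    _ ≤ ∫⁻ p, f (2 * g p.1) + f (2 * g p.2) ∂μ := lintegral_mono fun p => hmid _ _
    _ = ∫⁻ p, f (2 * g p.1) ∂μ + ∫⁻ p, f (2 * g p.2) ∂μ :=
        lintegral_add_left (hfg.comp measurable_fst) _
    _ = 2 * ∫⁻ x, f (2 * g x) ∂ν := by
        rw [← lintegral_map hfg measurable_fst, ← lintegral_map hfg measurable_snd, h1, h2,
          two_mul]

lemma lintegral_comp_add_map_diag {α : Type*} [MeasurableSpace α] (ν : Measure α)
    {g : α → ℝ≥0∞} (hg : Measurable g) {f : ℝ≥0∞ → ℝ≥0∞} (hf : Measurable f) :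
    ∫⁻ p, f (g p.1 + g p.2) ∂(ν.map fun x => (x, x)) = ∫⁻ x, f (2 * g x) ∂ν := by
  rw [lintegral_map (by fun_prop) (by fun_prop)]
  simp only [two_mul]

lemma two_mul_add_pow_le {R : Type*} [CommSemiring R] [LinearOrder R] [IsStrictOrderedRing R]
    [ExistsAddOfLE R] {a b : R} (ha : 0 ≤ a) (hb : 0 ≤ b) (k : ℕ) :
    2 * (a + b) ^ k ≤ (2 * a) ^ k + (2 * b) ^ k := by
  rcases Nat.eq_zero_or_pos k with rfl | hk
  · norm_num [one_add_one_eq_two]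
  calc 2 * (a + b) ^ k ≤ 2 * (2 ^ (k - 1) * (a ^ k + b ^ k)) := by
        gcongr; exact add_pow_le ha hb k
    _ = (2 * a) ^ k + (2 * b) ^ k := by
        rw [← mul_assoc, ← pow_succ', Nat.sub_add_cancel hk, mul_add, mul_pow, mul_pow]

lemma ENNReal.two_mul_add_pow_le (s t : ℝ≥0∞) (k : ℕ) :
    2 * (s + t) ^ k ≤ (2 * s) ^ k + (2 * t) ^ k := by
  rcases Nat.eq_zero_or_pos k with rfl | hk
  · norm_num [one_add_one_eq_two]
  rcases eq_or_ne s ⊤ with rfl | hs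
  · simp [ENNReal.mul_top, hk.ne']
  rcases eq_or_ne t ⊤ with rfl | ht
  · simp [ENNReal.mul_top, hk.ne']
  lift s to ℝ≥0 using hs
  lift t to ℝ≥0 using ht
  exact_mod_cast _root_.two_mul_add_pow_le s.2 t.2 k

lemma two_mul_tsum_mul_add_pow_le (a : ℕ → ℝ≥0∞) (s t : ℝ≥0∞) :
    2 * ∑' k, a k * (s + t) ^ k ≤ ∑' k, a k * (2 * s) ^ k + ∑' k, a k * (2 * t) ^ k := by
  rw [← ENNReal.tsum_mul_left, ← ENNReal.tsum_add]
  refine ENNReal.tsum_le_tsum fun k => ?_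
  rw [mul_left_comm, ← mul_add]
  gcongr
  exact ENNReal.two_mul_add_pow_le s t k

instance isProbabilityMeasure_stdGaussian (d : ℕ) : IsProbabilityMeasure (stdGaussian d) :=
  Measure.isProbabilityMeasure_map (by fun_prop)

instance isProbabilityMeasure_chi (d : ℕ) : IsProbabilityMeasure (chi d) :=
  Measure.isProbabilityMeasure_map measurable_norm.aemeasurable

lemma chiQuantile_eq_quantile (d : ℕ) : chiQuantile d = quantile (chi d) := by
  have hcdf : chiCDF d = cdf (chi d) := funext fun x => by
    rw [chiCDF, cdf_eq_real, measureReal_def]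
  ext u
  rw [chiQuantile, hcdf, quantile]

lemma muPM_eq_map_diag (d : ℕ) : muPM d = (chi d).map fun x => (x, x) := by
  rw [muPM, ← map_quantile_volume_Icc (chi d),
    AEMeasurable.map_map_of_aemeasurable (by fun_prop) (aemeasurable_quantile (chi d)),
    chiQuantile_eq_quantile]
  rfl

lemma ofReal_cRLF_eq_tsum {d : ℕ} (hd : 1 ≤ d) (v x y : ℝ) :
    ENNReal.ofReal (cRLF d v x y) =
      ∑' k : ℕ, ENNReal.ofReal (v ^ (2 * k) / (4 ^ k * k ! * Real.Gamma (k + d / 2))) *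
        (ENNReal.ofReal (x ^ 2) + ENNReal.ofReal (y ^ 2)) ^ k := by
  have hd' : (1 : ℝ) ≤ d := by exact_mod_cast hd
  have hGamma (k : ℕ) : 0 < Real.Gamma (k + d / 2) := Real.Gamma_pos_of_pos (by positivity)
  have hcoef (k : ℕ) : 0 ≤ v ^ (2 * k) / (4 ^ k * k ! * Real.Gamma (k + d / 2)) := by
    have := hGamma k
    rw [pow_mul]; positivity
  have hsum : Summable fun k : ℕ =>
      v ^ (2 * k) * (x ^ 2 + y ^ 2) ^ k / (4 ^ k * k ! * Real.Gamma (k + d / 2)) := by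
    convert summable_pow_div_factorial_mul_Gamma_add (s := d / 2) (by linarith)
      (v ^ 2 * (x ^ 2 + y ^ 2) / 4) using 2 with k
    rw [div_pow, mul_pow, ← pow_mul]
    field_simp
  rw [cRLF, ENNReal.ofReal_tsum_of_nonneg
    (fun k => by rw [mul_div_right_comm]; exact mul_nonneg (hcoef k) (by positivity)) hsum]
  refine tsum_congr fun k => ?_
  rw [mul_div_right_comm, ENNReal.ofReal_mul (hcoef k), ENNReal.ofReal_pow (by positivity),
    ENNReal.ofReal_add (sq_nonneg _) (sq_nonneg _)]

theorem positiveMonotone_maximizes_cRLF_general (d : ℕ) (hd : 1 ≤ d) (v : ℝ)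
    (μ : Measure (ℝ × ℝ))
    (h1 : μ.map Prod.fst = chi d) (h2 : μ.map Prod.snd = chi d) :
    ∫⁻ p, ENNReal.ofReal (cRLF d v p.1 p.2) ∂μ ≤
      ∫⁻ p, ENNReal.ofReal (cRLF d v p.1 p.2) ∂(muPM d) := by
  set a : ℕ → ℝ≥0∞ := fun k =>
    ENNReal.ofReal (v ^ (2 * k) / (4 ^ k * k ! * Real.Gamma (k + d / 2)))
  have hg : Measurable fun x : ℝ => ENNReal.ofReal (x ^ 2) := by fun_prop
  have hf : Measurable fun t : ℝ≥0∞ => ∑' k, a k * t ^ k :=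
    Measurable.tsum fun k => by fun_prop
  simp only [ofReal_cRLF_eq_tsum hd]
  rw [muPM_eq_map_diag, lintegral_comp_add_map_diag _ hg hf]
  exact lintegral_comp_add_le_of_map_fst_of_map_snd h1 h2 hg hf (two_mul_tsum_mul_add_pow_le a)

/-- Among all couplings of `χ_d` with itself, the positive monotone coupling maximizes the
expected cost `c_RLF`. -/
theorem positiveMonotone_maximizes_cRLF (d : ℕ) (hd : 1 ≤ d) (v : ℝ) (hv : 0 ≤ v)
    (μ : Measure (ℝ × ℝ)) [IsProbabilityMeasure μ]
    (h1 : μ.map Prod.fst = chi d) (h2 : μ.map Prod.snd = chi d) :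
    ∫⁻ p, ENNReal.ofReal (cRLF d v p.1 p.2) ∂μ ≤
      ∫⁻ p, ENNReal.ofReal (cRLF d v p.1 p.2) ∂(muPM d) :=
  positiveMonotone_maximizes_cRLF_general d hd v μ h1 h2

end
end
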